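/- In the Hodgkin-Huxley model on V = H¹₀(0,1): if v ∈ V and the flow satisfies the a priori bound ‖φ^d_s(v)‖_∞ ≤ max{|V₋|,|V₊|} for s ∈ [0,T], then ‖(I−Δ)φ^d_s(v)‖_V ≤ ‖(I−Δ)v‖_V + ΓT for a constant Γ depending only on the (finitely many) coefficients γ_i, c_i, the mollifier bounds ‖φ_{z_i}‖, ‖(I−Δ)φ_{z_i}‖_V, and max{|V₋|,|V₊|}. -/

import Mathlib

/-!
Applying `J` to the mild formulation and commuting it past the contractions `S(r)` gives
`‖J φ_s‖ ≤ ‖J v‖ + ∫₀ˢ ‖J b(φ_r)‖ dr`. The reaction term `b(w)` is a combination of the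
finitely many `ψ_i` whose coefficients `γ_i - c_i ⟨w, ψ_i⟩` are bounded by the a priori bound
on `⟨φ_r, ψ_i⟩`, so `‖J b(φ_r)‖` is bounded by a constant `Γ` and the integral by `Γ s ≤ Γ T`.
-/

open scoped RealInnerProductSpace

open Set Interval

section

variable {E F : Type*} [NormedAddCommGroup E] [NormedSpace ℝ E]
  [NormedAddCommGroup F] [NormedSpace ℝ F]

lemma ContinuousLinearMap.norm_map_sum_smul_le {ι : Type*} [Fintype ι] (J : E →L[ℝ] F)
    (a : ι → ℝ) (ψ : ι → E) : ‖J (∑ i, a i • ψ i)‖ ≤ ∑ i, |a i| * ‖J (ψ i)‖ := by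
  rw [map_sum]
  refine (norm_sum_le _ _).trans (Finset.sum_le_sum fun i _ => ?_)
  rw [map_smul, norm_smul, Real.norm_eq_abs]

lemma ContinuousLinearMap.norm_map_intervalIntegral_le [CompleteSpace E] [CompleteSpace F]
    (J : E →L[ℝ] F) {f : ℝ → E} {a b C : ℝ} (hC : 0 ≤ C) (h : ∀ r ∈ Ι a b, ‖J (f r)‖ ≤ C) :
    ‖J (∫ r in a..b, f r)‖ ≤ C * |b - a| := by
  by_cases hf : IntervalIntegrable f MeasureTheory.volume a b
  · rw [← J.intervalIntegral_comp_comm hf]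
    exact intervalIntegral.norm_integral_le_of_norm_le_const h
  · rw [intervalIntegral.integral_undef hf, map_zero, norm_zero]
    positivity

lemma norm_map_mild_le [CompleteSpace E] (S : ℝ → E →L[ℝ] E)
    (hS : ∀ r : ℝ, 0 ≤ r → ∀ x : E, ‖S r x‖ ≤ ‖x‖)
    (J : E →L[ℝ] E) (hcomm : ∀ (r : ℝ) (x : E), J (S r x) = S r (J x))
    {g : ℝ → E} {s M : ℝ} (hs : 0 ≤ s) (hM : 0 ≤ M) (hg : ∀ r ∈ Ioc 0 s, ‖J (g r)‖ ≤ M)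
    (v : E) : ‖J (S s v + ∫ r in (0:ℝ)..s, S (s - r) (g r))‖ ≤ ‖J v‖ + M * s := by
  have hintegral : ‖J (∫ r in (0:ℝ)..s, S (s - r) (g r))‖ ≤ M * s := by
    have := J.norm_map_intervalIntegral_le hM fun r hr => by
      rw [uIoc_of_le hs] at hr
      rw [hcomm]
      exact (hS _ (sub_nonneg.2 hr.2) _).trans (hg r hr)
    rwa [sub_zero, abs_of_nonneg hs] at this
  rw [map_add, hcomm]
  exact (norm_add_le _ _).trans (add_le_add (hS s hs _) hintegral)

end

lemma norm_map_sum_smul_sub_sum_inner_smul_le {V F ι : Type*} [NormedAddCommGroup V]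
    [InnerProductSpace ℝ V] [NormedAddCommGroup F] [NormedSpace ℝ F] [Fintype ι]
    (J : V →L[ℝ] F) (γ c : ι → ℝ) (ψ : ι → V) {R : ℝ} {w : V}
    (hw : ∀ i, |⟪w, ψ i⟫| ≤ R * ‖ψ i‖) :
    ‖J ((∑ i, γ i • ψ i) - ∑ i, (c i * ⟪w, ψ i⟫) • ψ i)‖ ≤
      ∑ i, (|γ i| + |c i| * (R * ‖ψ i‖)) * ‖J (ψ i)‖ := by
  rw [← Finset.sum_sub_distrib]
  simp only [← sub_smul]
  refine (J.norm_map_sum_smul_le _ ψ).trans (Finset.sum_le_sum fun i _ => ?_)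
  gcongr
  calc |γ i - c i * ⟪w, ψ i⟫| ≤ |γ i| + |c i| * |⟪w, ψ i⟫| := by
        rw [← abs_mul]; exact abs_sub _ _
    _ ≤ |γ i| + |c i| * (R * ‖ψ i‖) := by gcongr; exact hw i

theorem stmt_17_general {V ι : Type*} [NormedAddCommGroup V] [InnerProductSpace ℝ V]
    [CompleteSpace V] [Fintype ι]
    (T : ℝ)
    (S : ℝ → V →L[ℝ] V) (hS : ∀ r : ℝ, 0 ≤ r → ∀ x : V, ‖S r x‖ ≤ ‖x‖)
    (J : V →L[ℝ] V) (hcomm : ∀ (r : ℝ) (x : V), J (S r x) = S r (J x))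
    (γ c : ι → ℝ) (ψz : ι → V) (Rmax : ℝ)
    (b : V → V)
    (hb : ∀ w : V, b w = (∑ i, γ i • ψz i) - ∑ i, (c i * ⟪w, ψz i⟫) • ψz i) :
    ∃ Γ : ℝ, ∀ (v : V) (flow : ℝ → V),
      (∀ s ∈ Set.Icc (0:ℝ) T,
        flow s = S s v + ∫ r in (0:ℝ)..s, S (s - r) (b (flow r))) →
      (∀ i : ι, ∀ s ∈ Set.Icc (0:ℝ) T, |⟪flow s, ψz i⟫| ≤ Rmax * ‖ψz i‖) →
      ∀ s ∈ Set.Icc (0:ℝ) T, ‖J (flow s)‖ ≤ ‖J v‖ + Γ * T := by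
  set Γ := ∑ i, (|γ i| + |c i| * (Rmax * ‖ψz i‖)) * ‖J (ψz i)‖
  refine ⟨Γ, fun v flow hflow hbound s hs => ?_⟩
  have hreaction : ∀ r ∈ Icc 0 T, ‖J (b (flow r))‖ ≤ Γ := fun r hr => by
    rw [hb]
    exact norm_map_sum_smul_sub_sum_inner_smul_le J γ c ψz fun i => hbound i r hr
  have hΓ : 0 ≤ Γ := (norm_nonneg _).trans (hreaction s hs)
  calc ‖J (flow s)‖ = ‖J (S s v + ∫ r in (0:ℝ)..s, S (s - r) (b (flow r)))‖ := by
        rw [← hflow s hs]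
    _ ≤ ‖J v‖ + Γ * s :=
        norm_map_mild_le S hS J hcomm hs.1 hΓ
          (fun r hr => hreaction r ⟨hr.1.le, hr.2.trans hs.2⟩) v
    _ ≤ ‖J v‖ + Γ * T := by gcongr; exact hs.2

/-- Hodgkin–Huxley on `V = H¹₀(0,1)` (abstractly: a real Hilbert
space `V`, semigroup `S(r)` of contractions, `J = I - Δ` commuting with `S(r)`).
Let `b(w) = Σ_i γ_i ψ_i - Σ_i c_i ⟨w, ψ_i⟩ ψ_i`.  If the mild flow
`flow s = S(s)v + ∫₀ˢ S(s-r) b(flow r) dr` satisfies the a priori bound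
`|⟨flow s, ψ_i⟩| ≤ R_max ‖ψ_i‖` on `[0,T]` (coming from `‖flow s‖_∞ ≤ max{|V₋|,|V₊|}`),
then `‖J(flow s)‖ ≤ ‖J v‖ + Γ T` for a constant `Γ` depending only on the
coefficients `γ_i, c_i`, the mollifiers `ψ_i`, and `R_max`. -/
theorem stmt_17 {V ι : Type*} [NormedAddCommGroup V] [InnerProductSpace ℝ V]
    [CompleteSpace V] [Fintype ι]
    (T : ℝ) (hT : 0 ≤ T)
    (S : ℝ → V →L[ℝ] V) (hS : ∀ r : ℝ, 0 ≤ r → ∀ x : V, ‖S r x‖ ≤ ‖x‖)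
    (J : V →L[ℝ] V) (hcomm : ∀ (r : ℝ) (x : V), J (S r x) = S r (J x))
    (γ c : ι → ℝ) (ψz : ι → V) (Rmax : ℝ) (hR : 0 ≤ Rmax)
    (b : V → V)
    (hb : ∀ w : V, b w = (∑ i, γ i • ψz i) - ∑ i, (c i * ⟪w, ψz i⟫) • ψz i) :
    ∃ Γ : ℝ, ∀ (v : V) (flow : ℝ → V),
      (∀ s ∈ Set.Icc (0:ℝ) T,
        flow s = S s v + ∫ r in (0:ℝ)..s, S (s - r) (b (flow r))) →
      (∀ i : ι, ∀ s ∈ Set.Icc (0:ℝ) T, |⟪flow s, ψz i⟫| ≤ Rmax * ‖ψz i‖) →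
      ∀ s ∈ Set.Icc (0:ℝ) T, ‖J (flow s)‖ ≤ ‖J v‖ + Γ * T :=
  stmt_17_general T S hS J hcomm γ c ψz Rmax b hb
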